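/- (Lemma 3 of the paper.) Let ≈ be an SCER on strings over Σ, f a prefix encoding with respect to ≈, and D a dictionary. Let P_k ∈ D and 1 ≤ j < |P_k|, and write Fail(f(P_k)[:j+1]) = f(P_k[i:j+1]) for the minimal admissible i. If Fail(f(P_k)[:j+1]) ≠ ε (equivalently i ≤ j + 1), then there exists q ≥ 0 such that Fail^q(f(P_k)[:j]) = f(P_k[i:j]), i.e., some iterate of the failure function applied to f(P_k)[:j] equals the parent (the prefix of length one less) of Fail(f(P_k)[:j+1]). -/

import Mathlib

/-- The substring `X[i:j]` (1-indexed, inclusive; `ε` when `j < i`). -/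
def seg {σ : Type*} (X : List σ) (i j : ℕ) : List σ := (X.take j).drop (i - 1)

/-- `Pref(f(D))`: the set of all prefixes (including `ε`) of the encoded
patterns; these are the states of the SCER automaton of `D`. -/
def PrefSet {σ π : Type*} (f : List σ → List π) (D : Finset (List σ)) :
    Set (List π) :=
  {S | ∃ P ∈ D, S <+: f P}

/-- The index `i = min {l | 1 < l ≤ j + 1, f(P[l:j]) ∈ Pref(f(D))}` used in the
definition of the failure function. -/
noncomputable def failIdx {σ π : Type*} (f : List σ → List π)
    (D : Finset (List σ)) (P : List σ) (j : ℕ) : ℕ :=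
  sInf {l | 1 < l ∧ l ≤ j + 1 ∧ f (seg P l j) ∈ PrefSet f D}


/-
Along the failure chain of `f(P)[:j]` the states are exactly the codes `f(P[l:j])` with
`f(P[l:j]) ∈ Pref(f(D))`, visited in increasing order of `l`, and none is skipped: if
`f(P[l:j]) = f(P')[:m]` for some `P' ∈ D`, substring consistency transports every suffix of
`P'[:m]` to the corresponding suffix of `P[l:j]`, so the minimal index defining
`Fail(f(P')[:m])` is, after a shift by `l - 1`, the next admissible index after `l`.
The parent `f(P[i:j])` of `Fail(f(P)[:j+1]) = f(P[i:j+1])` is a prefix of a state, hence a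
state itself, so the chain starting at `l = 1` reaches it.
-/

theorem Function.exists_iterate_apply_eq_of_step {α : Type*} (g : α → α) (φ : ℕ → α)
    (S : Set ℕ) {i : ℕ}
    (step : ∀ l ∈ S, l < i → ∃ l' ∈ S, l < l' ∧ l' ≤ i ∧ g (φ l) = φ l') :
    ∀ l ∈ S, l ≤ i → ∃ q, g^[q] (φ l) = φ i := by
  intro l hl hli
  induction h : i - l using Nat.strong_induction_on generalizing l with
  | _ n ih =>
    rcases hli.eq_or_lt with rfl | hlt
    · exact ⟨0, rfl⟩
    obtain ⟨l', hl', hll', hl'i, hg⟩ := step l hl hlt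
    obtain ⟨q, hq⟩ := ih (i - l') (by omega) l' hl' hl'i rfl
    exact ⟨q + 1, by rw [Function.iterate_succ_apply, hg, hq]⟩

section Seg

variable {σ : Type*}

theorem seg_one (X : List σ) (j : ℕ) : seg X 1 j = X.take j := by
  simp [seg]

theorem seg_eq_nil_of_lt (X : List σ) {i j : ℕ} (h : j < i) : seg X i j = [] :=
  List.drop_eq_nil_of_le (by grind [List.length_take])

theorem seg_take_self (X : List σ) (t m : ℕ) : seg (X.take m) t m = seg X t m := by
  simp only [seg, List.take_take, min_self]

theorem seg_seg_add (Y : List σ) (k t m : ℕ) (ht : 1 ≤ t) :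
    seg (seg Y (k + 1) (k + m)) t m = seg Y (k + t) (k + m) := by
  simp only [seg, Nat.add_sub_cancel, List.take_drop, List.take_take, min_self, List.drop_drop]
  congr 1
  omega

theorem seg_prefix_seg_succ (X : List σ) (i j : ℕ) : seg X i j <+: seg X i (j + 1) :=
  ((List.prefix_take_iff.mpr ⟨List.take_prefix _ _, by simp⟩)).drop (i - 1)

end Seg

theorem PrefSet.mem_of_prefix {σ π : Type*} {f : List σ → List π} {D : Finset (List σ)}
    {S S' : List π} (hS : S ∈ PrefSet f D) (h : S' <+: S) : S' ∈ PrefSet f D :=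
  let ⟨P, hP, hSP⟩ := hS
  ⟨P, hP, h.trans hSP⟩

theorem failIdx_spec {σ π : Type*} {f : List σ → List π} {D : Finset (List σ)}
    (h0 : f [] ∈ PrefSet f D) (P : List σ) {j : ℕ} (hj : 1 ≤ j) :
    1 < failIdx f D P j ∧ failIdx f D P j ≤ j + 1 ∧ f (seg P (failIdx f D P j) j) ∈ PrefSet f D :=
  Nat.sInf_mem (s := {l | 1 < l ∧ l ≤ j + 1 ∧ f (seg P l j) ∈ PrefSet f D})
    ⟨j + 1, by omega, le_rfl, by rwa [seg_eq_nil_of_lt P (Nat.lt_succ_self j)]⟩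

theorem failIdx_le {σ π : Type*} {f : List σ → List π} {D : Finset (List σ)} {P : List σ}
    {j l : ℕ} (hl : 1 < l ∧ l ≤ j + 1 ∧ f (seg P l j) ∈ PrefSet f D) : failIdx f D P j ≤ l :=
  Nat.sInf_le hl

structure IsPrefixEncoding {σ π : Type*} (R : List σ → List σ → Prop)
    (f : List σ → List π) : Prop where
  length_eq : ∀ X, (f X).length = X.length
  take_eq_of_one_le : ∀ (X : List σ) (i : ℕ), 1 ≤ i → i ≤ X.length → f (X.take i) = (f X).take i
  eq_iff : ∀ X Y, f X = f Y ↔ R X Y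

namespace IsPrefixEncoding

variable {σ π : Type*} {R : List σ → List σ → Prop} {f : List σ → List π}

theorem nil (hf : IsPrefixEncoding R f) : f [] = [] :=
  List.length_eq_zero_iff.mp (hf.length_eq [])

theorem take_eq (hf : IsPrefixEncoding R f) (X : List σ) {i : ℕ} (hi : i ≤ X.length) :
    f (X.take i) = (f X).take i := by
  rcases Nat.eq_zero_or_pos i with rfl | hi0
  · simp [hf.nil]
  · exact hf.take_eq_of_one_le X i hi0 hi

theorem isPrefix_of_isPrefix (hf : IsPrefixEncoding R f) {X Y : List σ} (h : X <+: Y) :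
    f X <+: f Y := by
  rw [List.prefix_iff_eq_take.mp h, hf.take_eq Y h.length_le]
  exact List.take_prefix _ _

theorem nil_mem_prefSet (hf : IsPrefixEncoding R f) {D : Finset (List σ)} {P : List σ}
    (hP : P ∈ D) : f [] ∈ PrefSet f D :=
  ⟨P, hP, hf.nil ▸ List.nil_prefix⟩

theorem seg_eq_seg_of_eq
    (hsub : ∀ X Y, R X Y → ∀ i j, 1 ≤ i → i ≤ j → j ≤ X.length → R (seg X i j) (seg Y i j))
    (hf : IsPrefixEncoding R f) {X Y : List σ} (h : f X = f Y) {t m : ℕ} (ht : 1 ≤ t)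
    (hm : m ≤ X.length) : f (seg X t m) = f (seg Y t m) := by
  rcases le_or_gt t m with htm | hmt
  · exact (hf.eq_iff _ _).mpr (hsub X Y ((hf.eq_iff X Y).mp h) t m ht htm hm)
  · rw [seg_eq_nil_of_lt X hmt, seg_eq_nil_of_lt Y hmt]

theorem fail_seg_eq_seg_next
    (hsub : ∀ X Y, R X Y → ∀ i j, 1 ≤ i → i ≤ j → j ≤ X.length → R (seg X i j) (seg Y i j))
    (hf : IsPrefixEncoding R f) {D : Finset (List σ)} {Fail : List π → List π}
    (hFail : ∀ P ∈ D, ∀ j : ℕ, 1 ≤ j → j ≤ P.length →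
      Fail ((f P).take j) = f (seg P (failIdx f D P j) j))
    {P : List σ} {l j : ℕ} (hl : 1 ≤ l) (hlj : l ≤ j) (hjP : j ≤ P.length)
    (hstate : f (seg P l j) ∈ PrefSet f D) :
    ∃ l', l < l' ∧ f (seg P l' j) ∈ PrefSet f D ∧
      (∀ s, l < s → s ≤ j + 1 → f (seg P s j) ∈ PrefSet f D → l' ≤ s) ∧
      Fail (f (seg P l j)) = f (seg P l' j) := by
  obtain ⟨k, rfl⟩ : ∃ k, l = k + 1 := ⟨l - 1, by omega⟩
  obtain ⟨m, rfl⟩ : ∃ m, j = k + m := ⟨j - k, by omega⟩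
  obtain ⟨P', hP', hpre⟩ := hstate
  have hlen : (f (seg P (k + 1) (k + m))).length = m := by
    simp only [hf.length_eq, seg, List.length_drop, List.length_take]
    omega
  have hmP' : m ≤ P'.length := by simpa [hlen, hf.length_eq] using hpre.length_le
  have hcode : f (P'.take m) = f (seg P (k + 1) (k + m)) := by
    have := List.prefix_iff_eq_take.mp hpre
    rw [hlen] at this
    rw [hf.take_eq P' hmP', ← this]
  have shift : ∀ t, 1 ≤ t → f (seg P' t m) = f (seg P (k + t) (k + m)) := fun t ht => by
    rw [← seg_take_self, hf.seg_eq_seg_of_eq hsub hcode ht (by simp [hmP']),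
      seg_seg_add _ _ _ _ ht]
  obtain ⟨h1, h2, h3⟩ := failIdx_spec (hf.nil_mem_prefSet hP') P' (j := m) (by omega)
  refine ⟨k + failIdx f D P' m, by omega, by rw [← shift _ (by omega)]; exact h3,
    fun s hs hs' hsS => ?_, ?_⟩
  · have := failIdx_le (f := f) (D := D) (P := P') (j := m) (l := s - k)
      ⟨by omega, by omega, by rwa [shift _ (by omega), show k + (s - k) = s by omega]⟩
    omega
  · rw [← hcode, hf.take_eq P' hmP', hFail P' hP' m (by omega) hmP', shift _ (by omega)]

end IsPrefixEncoding

theorem fail_parent_in_chain_general {σ π : Type*} (R : List σ → List σ → Prop)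
    (hsub : ∀ X Y, R X Y → ∀ i j, 1 ≤ i → i ≤ j → j ≤ X.length →
      R (seg X i j) (seg Y i j))
    (f : List σ → List π)
    (hf1 : ∀ X, (f X).length = X.length)
    (hf2 : ∀ (X : List σ) (i : ℕ), 1 ≤ i → i ≤ X.length →
      f (X.take i) = (f X).take i)
    (hf3 : ∀ X Y, f X = f Y ↔ R X Y)
    (D : Finset (List σ))
    (Fail : List π → List π)
    (hFail : ∀ P ∈ D, ∀ j : ℕ, 1 ≤ j → j ≤ P.length →
      Fail ((f P).take j) = f (seg P (failIdx f D P j) j))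
    (P_k : List σ) (hPk : P_k ∈ D) (j : ℕ)
    (hjP : j < P_k.length)
    (hne : Fail ((f P_k).take (j + 1)) ≠ []) :
    ∃ q : ℕ, Fail^[q] ((f P_k).take j) =
      f (seg P_k (failIdx f D P_k (j + 1)) j) := by
  have hf : IsPrefixEncoding R f := ⟨hf1, hf2, hf3⟩
  set i := failIdx f D P_k (j + 1)
  obtain ⟨hi1, -, hstate⟩ := failIdx_spec (hf.nil_mem_prefSet hPk) P_k (j := j + 1) (by omega)
  have hij : i ≤ j + 1 := by
    by_contra! h
    exact hne (by rw [hFail P_k hPk (j + 1) (by omega) hjP, seg_eq_nil_of_lt _ h, hf.nil])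
  have hparent : f (seg P_k i j) ∈ PrefSet f D :=
    PrefSet.mem_of_prefix hstate (hf.isPrefix_of_isPrefix (seg_prefix_seg_succ _ _ _))
  have hstart : f (seg P_k 1 j) = (f P_k).take j := by rw [seg_one, hf.take_eq _ hjP.le]
  rw [← hstart]
  refine Function.exists_iterate_apply_eq_of_step Fail (fun l => f (seg P_k l j))
    {l | 1 ≤ l ∧ f (seg P_k l j) ∈ PrefSet f D} ?_ 1
    ⟨le_rfl, hstart ▸ ⟨P_k, hPk, List.take_prefix _ _⟩⟩ (by omega)
  rintro l ⟨hl1, hl⟩ hli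
  obtain ⟨l', hll', hl', hmin, hFl⟩ := hf.fail_seg_eq_seg_next hsub hFail hl1 (by omega) hjP.le hl
  exact ⟨l', ⟨by omega, hl'⟩, hll', hmin i hli hij hparent, hFl⟩

/-- Lemma 3.  Let `R` be an SCER, `f` a prefix encoding w.r.t. `R`, `D` a
dictionary, and `Fail` the failure function of the SCER automaton.  Let
`P_k ∈ D`, `1 ≤ j < |P_k|`, and write `Fail(f(P_k)[:j+1]) = f(P_k[i:j+1])`
with `i = failIdx f D P_k (j+1)` minimal.  If `Fail(f(P_k)[:j+1]) ≠ ε`, then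
there is `q ≥ 0` such that `Fail^q(f(P_k)[:j]) = f(P_k[i:j])`, i.e. some
iterate of the failure function at `f(P_k)[:j]` equals the parent of
`Fail(f(P_k)[:j+1])`. -/
theorem fail_parent_in_chain {σ π : Type*} (R : List σ → List σ → Prop)
    (hequiv : Equivalence R)
    (hlen : ∀ X Y, R X Y → X.length = Y.length)
    (hsub : ∀ X Y, R X Y → ∀ i j, 1 ≤ i → i ≤ j → j ≤ X.length →
      R (seg X i j) (seg Y i j))
    (f : List σ → List π)
    (hf1 : ∀ X, (f X).length = X.length)
    (hf2 : ∀ (X : List σ) (i : ℕ), 1 ≤ i → i ≤ X.length →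
      f (X.take i) = (f X).take i)
    (hf3 : ∀ X Y, f X = f Y ↔ R X Y)
    (D : Finset (List σ))
    (Fail : List π → List π)
    (hFail : ∀ P ∈ D, ∀ j : ℕ, 1 ≤ j → j ≤ P.length →
      Fail ((f P).take j) = f (seg P (failIdx f D P j) j))
    (P_k : List σ) (hPk : P_k ∈ D) (j : ℕ)
    (hj : 1 ≤ j) (hjP : j < P_k.length)
    (hne : Fail ((f P_k).take (j + 1)) ≠ []) :
    ∃ q : ℕ, Fail^[q] ((f P_k).take j) =
      f (seg P_k (failIdx f D P_k (j + 1)) j) :=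
  fail_parent_in_chain_general R hsub f hf1 hf2 hf3 D Fail hFail P_k hPk j hjP hne
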